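/- arXiv:0708.0319 — 6 statements merged into one kernel-verified Lean document; each statement's English description precedes it below -/
import Mathlib

section
/- Suppose at a point y on the boundary of the nonnegative orthant, some species X_j with y_j = 0 has at least one strictly positive input term in the j-th coordinate of the vector field f while all output terms vanish; then there exist ε > 0 and k > 0 such that f_j(x) > k for all x ∈ ℝ^m_{>0} with |x − y| < ε, and consequently y cannot be an ω-limit point of any trajectory starting in ℝ^m_{>0}. -/
/-!
The input terms of `f_j` are nonnegative on the orthant, one of them is positive at `p` and the
output terms vanish there, so `f_j p > 0`; by continuity `f_j > k` and `‖f‖ < M` on a closed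
ball of radius `r` around `p`. If `x (t_n)` lies within `r / 2` of `p`, the speed bound, run
backwards in time, keeps the trajectory in that ball during `[t_n - r / (2M), t_n]`, so `x_j`
grew by at least `k r / (2M)` on that interval. As `x_j > 0 = p_j`, the values `x_j (t_n)`
cannot tend to `p_j`.
-/

open Filter Set Topology

/-- The right-hand side of the chemical reaction network ODE. -/
def netF {m : ℕ} {ι : Type} [Fintype ι] (y yp : ι → Fin m → ℕ)
    (R : ι → (Fin m → ℝ) → ℝ) (x : Fin m → ℝ) : Fin m → ℝ :=
  ∑ r : ι, R r x • (fun i => (yp r i : ℝ) - (y r i : ℝ))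

def IsOmegaLimitPoint {E : Type*} [TopologicalSpace E] (x : ℝ → E) (p : E) : Prop :=
  ∃ tn : ℕ → ℝ, Tendsto tn atTop atTop ∧ Tendsto (fun n => x (tn n)) atTop (𝓝 p)

section Trajectories

variable {E : Type*} [NormedAddCommGroup E] [NormedSpace ℝ E]

theorem dist_le_of_norm_deriv_lt_on_closedBall {γ γ' : ℝ → E} {a b r M : ℝ} {c : E}
    (hγ : ∀ t ∈ Icc a b, HasDerivAt γ (γ' t) t)
    (hbound : ∀ t ∈ Icc a b, dist (γ t) c ≤ r → ‖γ' t‖ < M)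
    (hM : 0 ≤ M) (hr : dist (γ b) c + M * (b - a) ≤ r) :
    ∀ t ∈ Icc a b, dist (γ t) c ≤ r := by
  have hmem : ∀ s ∈ Icc 0 (b - a), b - s ∈ Icc a b := fun s hs =>
    ⟨by linarith [hs.2], by linarith [hs.1]⟩
  have hderiv : ∀ s ∈ Icc 0 (b - a),
      HasDerivAt (fun s => γ (b - s) - c) (-γ' (b - s)) s := fun s hs =>
    ((hγ (b - s) (hmem s hs)).comp_const_sub b s).sub_const c
  have hfence := image_norm_le_of_norm_deriv_right_lt_deriv_boundary'
    (f := fun s => γ (b - s) - c) (B := fun s => dist (γ b) c + M * s) (B' := fun _ => M)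
    (fun s hs => (hderiv s hs).continuousAt.continuousWithinAt)
    (fun s hs => (hderiv s (Ico_subset_Icc_self hs)).hasDerivWithinAt)
    (by simp [dist_eq_norm]) (by fun_prop)
    (fun s _ => by
      simpa using (((hasDerivAt_id' s).const_mul M).const_add (dist (γ b) c)).hasDerivWithinAt)
    (fun s hs hs_eq => by
      rw [norm_neg]
      refine hbound _ (hmem s (Ico_subset_Icc_self hs)) ?_
      rw [dist_eq_norm, hs_eq]
      nlinarith [hs.2])
  intro t ht
  have := hfence ⟨sub_nonneg.2 ht.2, by linarith [ht.1]⟩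
  simp only [sub_sub_cancel, ← dist_eq_norm] at this
  nlinarith [ht.1]

theorem not_isOmegaLimitPoint_of_field_pointing_inward {F : E → E} {x : ℝ → E} {p : E}
    (ℓ : E →L[ℝ] ℝ) (hF : ContinuousAt F p) (hFp : 0 < ℓ (F p))
    (hx : ∀ t, 0 ≤ t → HasDerivAt x (F (x t)) t) (hℓ : ∀ t, 0 ≤ t → ℓ p ≤ ℓ (x t)) :
    ¬ IsOmegaLimitPoint x p := by
  rintro ⟨tn, htn, hxtn⟩
  set k := ℓ (F p) / 2
  set M := ‖F p‖ + 1
  have hk : 0 < k := half_pos hFp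
  have hM : 0 < M := by positivity
  have hnear : ∀ᶠ z in 𝓝 p, ‖F z‖ < M ∧ k < ℓ (F z) :=
    (hF.norm.eventually_lt_const (lt_add_one _)).and
      ((ℓ.continuous.continuousAt.comp hF).eventually_const_lt (half_lt_self hFp))
  obtain ⟨r, hr, hball⟩ := Metric.nhds_basis_closedBall.eventually_iff.1 hnear
  set h := r / (2 * M)
  have hh : 0 < h := by positivity
  obtain ⟨n, hhn, hdist, hℓn⟩ : ∃ n, h ≤ tn n ∧ x (tn n) ∈ Metric.closedBall p (r / 2) ∧
      ℓ (x (tn n)) < ℓ p + k * h :=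
    ((htn.eventually_ge_atTop h).and ((hxtn.eventually (Metric.closedBall_mem_nhds p
      (half_pos hr))).and (((ℓ.continuous.tendsto p).comp hxtn).eventually_lt_const
        (lt_add_of_pos_right _ (mul_pos hk hh))))).exists
  set b := tn n
  have hxab : ∀ t ∈ Icc (b - h) b, HasDerivAt x (F (x t)) t := fun t ht =>
    hx t (by linarith [ht.1])
  have hstay : ∀ t ∈ Icc (b - h) b, dist (x t) p ≤ r :=
    dist_le_of_norm_deriv_lt_on_closedBall hxab (fun t _ ht => (hball ht).1) hM.le (by
      have hMh : M * h = r / 2 := by simp only [h]; field_simp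
      linarith [sub_sub_cancel b h, Metric.mem_closedBall.1 hdist])
  have hℓx : ∀ t ∈ Icc (b - h) b, HasDerivAt (fun s => ℓ (x s)) (ℓ (F (x t))) t := fun t ht =>
    ℓ.hasFDerivAt.comp_hasDerivAt t (hxab t ht)
  have hgrowth : k * (b - (b - h)) ≤ ℓ (x b) - ℓ (x (b - h)) :=
    (convex_Icc _ _).mul_sub_le_image_sub_of_le_deriv
      (fun t ht => (hℓx t ht).continuousAt.continuousWithinAt)
      (fun t ht => (hℓx t (interior_subset ht)).differentiableAt.differentiableWithinAt)
      (fun t ht => by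
        rw [(hℓx t (interior_subset ht)).deriv]
        exact (hball (hstay t (interior_subset ht))).2.le)
      _ (left_mem_Icc.2 (by linarith)) _ (right_mem_Icc.2 (by linarith)) (by linarith)
  linarith [hℓ (b - h) (by linarith)]

end Trajectories

section ReactionNetworks

variable {m : ℕ} {ι : Type} [Fintype ι] (y yp : ι → Fin m → ℕ) (R : ι → (Fin m → ℝ) → ℝ)

theorem netF_apply (x : Fin m → ℝ) (j : Fin m) :
    netF y yp R x j = ∑ r : ι, R r x * ((yp r j : ℝ) - (y r j : ℝ)) := by
  simp [netF, Finset.sum_apply]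

variable {y yp R}

theorem continuous_netF (hR : ∀ r, Continuous (R r)) : Continuous (netF y yp R) :=
  continuous_finsetSum _ fun r _ => (hR r).smul continuous_const

theorem netF_apply_pos {p : Fin m → ℝ} {j : Fin m} (hnonneg : ∀ r, 0 ≤ R r p)
    (hinput : ∃ r, y r j < yp r j ∧ 0 < R r p) (houtput : ∀ r, yp r j < y r j → R r p = 0) :
    0 < netF y yp R p j := by
  rw [netF_apply]
  obtain ⟨r₀, hr₀, hRr₀⟩ := hinput
  refine Finset.sum_pos' (fun r _ => ?_) ⟨r₀, Finset.mem_univ r₀, ?_⟩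
  · rcases lt_or_ge (yp r j) (y r j) with hout | hin
    · simp [houtput r hout]
    · exact mul_nonneg (hnonneg r) (sub_nonneg.2 (by exact_mod_cast hin))
  · exact mul_pos hRr₀ (sub_pos.2 (by exact_mod_cast hr₀))

end ReactionNetworks

theorem positive_input_not_omega_limit_general
    {m : ℕ} {ι : Type} [Fintype ι]
    (y yp : ι → Fin m → ℕ) (R : ι → (Fin m → ℝ) → ℝ)
    (hC1 : ∀ r, ContDiff ℝ 1 (R r))
    (hnonneg : ∀ r, ∀ x : Fin m → ℝ, (∀ i, 0 ≤ x i) → 0 ≤ R r x)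
    (p : Fin m → ℝ) (hpnn : ∀ i, 0 ≤ p i)
    (j : Fin m) (hpj : p j = 0)
    (hinput : ∃ r, y r j < yp r j ∧ 0 < R r p)
    (houtput : ∀ r, yp r j < y r j → R r p = 0) :
    ∃ ε > (0 : ℝ), ∃ k > (0 : ℝ),
      (∀ x : Fin m → ℝ, (∀ i, 0 < x i) → dist x p < ε → k < netF y yp R x j) ∧
      ∀ x : ℝ → Fin m → ℝ,
        (∀ t : ℝ, 0 ≤ t → ∀ i, 0 < x t i) →
        (∀ t : ℝ, 0 ≤ t → HasDerivAt x (netF y yp R (x t)) t) →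
        ¬ ∃ tn : ℕ → ℝ, Tendsto tn atTop atTop ∧
            Tendsto (fun n => x (tn n)) atTop (nhds p) := by
  have hcont : Continuous (netF y yp R) := continuous_netF fun r => (hC1 r).continuous
  have hpos : 0 < netF y yp R p j := netF_apply_pos (fun r => hnonneg r p hpnn) hinput houtput
  obtain ⟨ε, hε, hball⟩ := Metric.eventually_nhds_iff.1
    ((((continuous_apply j).comp hcont).tendsto p).eventually_const_lt (half_lt_self hpos))
  refine ⟨ε, hε, _, half_pos hpos, fun z _ hz => hball hz, fun x hxpos hxder => ?_⟩
  exact not_isOmegaLimitPoint_of_field_pointing_inward (ContinuousLinearMap.proj j)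
    hcont.continuousAt hpos hxder fun t ht => by simpa [hpj] using (hxpos t ht j).le

/-- If at a boundary point `p` (with `p j = 0`) some input term for species `j`
is strictly positive while all output terms for `j` vanish, then `f j > k` on a
neighborhood of `p` in the positive orthant, and consequently `p` cannot be an
ω-limit point of any trajectory remaining in the positive orthant. -/
theorem positive_input_not_omega_limit
    {m : ℕ} {ι : Type} [Fintype ι]
    (y yp : ι → Fin m → ℕ) (R : ι → (Fin m → ℝ) → ℝ)
    (hC1 : ∀ r, ContDiff ℝ 1 (R r))
    (hnonneg : ∀ r, ∀ x : Fin m → ℝ, (∀ i, 0 ≤ x i) → 0 ≤ R r x)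
    (hvanish : ∀ r, ∀ x : Fin m → ℝ, ∀ i, y r i ≠ 0 → x i = 0 → R r x = 0)
    (p : Fin m → ℝ) (hpnn : ∀ i, 0 ≤ p i)
    (j : Fin m) (hpj : p j = 0)
    (hinput : ∃ r, y r j < yp r j ∧ 0 < R r p)
    (houtput : ∀ r, yp r j < y r j → R r p = 0) :
    ∃ ε > (0 : ℝ), ∃ k > (0 : ℝ),
      (∀ x : Fin m → ℝ, (∀ i, 0 < x i) → dist x p < ε → k < netF y yp R x j) ∧
      ∀ x : ℝ → Fin m → ℝ,
        (∀ t : ℝ, 0 ≤ t → ∀ i, 0 < x t i) →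
        (∀ t : ℝ, 0 ≤ t → HasDerivAt x (netF y yp R (x t)) t) →
        ¬ ∃ tn : ℕ → ℝ, Tendsto tn atTop atTop ∧
            Tendsto (fun n => x (tn n)) atTop (nhds p) :=
  positive_input_not_omega_limit_general y yp R hC1 hnonneg p hpnn j hpj hinput houtput
end

section
/- (Key proposition) Let the reaction system be weakly reversible, deficiency zero, with mass action kinetics, and let x̄ be the unique positive equilibrium in the compatibility class of x(0) ∈ ℝ^m_{>0}. Let V(x) = Σ_i [x_i(ln x_i − ln x̄_i − 1) + x̄_i] be strictly decreasing along the trajectory. If y ∈ ω(x(0)) is an ω-limit point of the trajectory, then there exists a nonzero vector z₀ ∈ S with supp(z₀) ⊆ supp(y). -/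
open Filter

/-- The right-hand side for mass action kinetics with rate constants `k`. -/
def massF {m : ℕ} {ι : Type} [Fintype ι] (y yp : ι → Fin m → ℕ) (k : ι → ℝ) :
    (Fin m → ℝ) → Fin m → ℝ :=
  netF y yp (fun r x => k r * ∏ i, x i ^ (y r i))

/-- The stoichiometric subspace `S = Span{y' - y}`. -/
def stoichSubspace {m : ℕ} {ι : Type} [Fintype ι] (y yp : ι → Fin m → ℕ) :
    Submodule ℝ (Fin m → ℝ) :=
  Submodule.span ℝ (Set.range fun r => fun i => (yp r i : ℝ) - (y r i : ℝ))

/-- The set of complexes of the network. -/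
def complexes {m : ℕ} {ι : Type} [Fintype ι] (y yp : ι → Fin m → ℕ) :
    Set (Fin m → ℕ) :=
  Set.range y ∪ Set.range yp

/-- The edge relation of the reaction digraph: `a → b` iff some reaction has
reactant complex `a` and product complex `b`. -/
def reactsTo {m : ℕ} {ι : Type} [Fintype ι] (y yp : ι → Fin m → ℕ)
    (a b : Fin m → ℕ) : Prop :=
  ∃ r, y r = a ∧ yp r = b

/-- Weak reversibility: for every reaction there is a directed path from the
product complex back to the reactant complex. -/
def WeaklyReversible {m : ℕ} {ι : Type} [Fintype ι] (y yp : ι → Fin m → ℕ) : Prop :=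
  ∀ r, Relation.ReflTransGen (reactsTo y yp) (yp r) (y r)

/-- The linkage classes: connected components of the reaction graph
(equivalence classes of complexes under the symmetric-transitive closure). -/
def linkageClasses {m : ℕ} {ι : Type} [Fintype ι] (y yp : ι → Fin m → ℕ) :
    Set (Set (Fin m → ℕ)) :=
  {L | ∃ a ∈ complexes y yp, L = {b | Relation.EqvGen (reactsTo y yp) a b}}

/-- Deficiency zero: `n - l - s = 0`, i.e. `n = l + s`. -/
def DeficiencyZero {m : ℕ} {ι : Type} [Fintype ι] (y yp : ι → Fin m → ℕ) : Prop :=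
  (complexes y yp).ncard =
    (linkageClasses y yp).ncard + Module.finrank ℝ (stoichSubspace y yp)

/-- `W` is a semi-locking set: it is nonempty and every reaction whose product
complex contains a species of `W` has a species of `W` in its reactant complex. -/
def Semilocking {m : ℕ} {ι : Type} [Fintype ι] (y yp : ι → Fin m → ℕ)
    (W : Set (Fin m)) : Prop :=
  W.Nonempty ∧ ∀ r, (∃ i ∈ W, yp r i ≠ 0) → ∃ i ∈ W, y r i ≠ 0

/-! Suppose no nonzero vector of `S` is supported in `supp p`. Then restriction to the zero set
`Z` of `p` is injective on `S`, so the displacements `s = x(tₙ) - p ∈ S` satisfy `‖s‖ ≤ K σ`,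
where `σ = ∑_{i ∈ Z} sᵢ ≥ 0`. The coordinates in `Z` contribute `∑ sᵢ log sᵢ ≤ σ log σ` to
`V(p + s) - V(p)`, and the others only `O(σ)` because `u ↦ u log u` is differentiable away
from `0`; hence `V(x(tₙ)) ≤ V(p)` for large `n`. But `V` decreases strictly to its limit `V(p)`
along the trajectory, so `V(p) < V(x(tₙ))`. -/

open Real Asymptotics Topology

theorem sum_mul_log_le_mul_log_sum {ι : Type*} {s : Finset ι} {f : ι → ℝ}
    (hf : ∀ i ∈ s, 0 ≤ f i) :
    ∑ i ∈ s, f i * log (f i) ≤ (∑ i ∈ s, f i) * log (∑ i ∈ s, f i) := by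
  rw [Finset.sum_mul]
  refine Finset.sum_le_sum fun i hi => ?_
  rcases (hf i hi).eq_or_lt with hfi | hfi
  · simp [← hfi]
  · exact mul_le_mul_of_nonneg_left
      (log_le_log hfi (Finset.single_le_sum hf hi)) hfi.le

theorem eventually_mul_log_add_nonpos {α : Type*} {l : Filter α} {σ R : α → ℝ}
    (hσ : Tendsto σ l (𝓝 0)) (hσ₀ : ∀ᶠ a in l, 0 ≤ σ a) (hR : R =O[l] σ) :
    ∀ᶠ a in l, σ a * log (σ a) + R a ≤ 0 := by
  obtain ⟨c, hc⟩ := hR.bound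
  filter_upwards [hc, hσ₀, hσ.eventually_lt_const (exp_pos (-c))] with a hRa hσa hσc
  rw [norm_eq_abs, norm_of_nonneg hσa] at hRa
  have hlog : σ a * log (σ a) ≤ -c * σ a := by
    rcases hσa.eq_or_lt with h | h
    · simp [← h]
    · rw [mul_comm (-c)]
      exact mul_le_mul_of_nonneg_left ((log_lt_iff_lt_exp h).2 hσc).le h.le
  linarith [le_abs_self (R a)]

theorem StrictAntiOn.lt_of_tendsto_atTop {α β γ : Type*} [LinearOrder α] [NoMaxOrder α]
    [LinearOrder γ] [TopologicalSpace γ] [OrderClosedTopology γ] {f : α → γ} {a : α}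
    (hf : StrictAntiOn f (Set.Ici a)) {l : Filter β} [l.NeBot] {u : β → α}
    (hu : Tendsto u l atTop) {L : γ} (hL : Tendsto (f ∘ u) l (𝓝 L)) {t : α} (ht : a ≤ t) :
    L < f t := by
  obtain ⟨t', htt'⟩ := exists_gt t
  have ht' : a ≤ t' := ht.trans htt'.le
  refine lt_of_le_of_lt (le_of_tendsto hL ?_) (hf ht ht' htt')
  filter_upwards [hu.eventually_ge_atTop t'] with b hb
  exact hf.antitoneOn ht' (ht'.trans hb) hb

theorem sub_mem_of_hasDerivAt_mem {E : Type*} [NormedAddCommGroup E] [NormedSpace ℝ E]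
    [FiniteDimensional ℝ E] (S : Submodule ℝ E) {x v : ℝ → E} {a : ℝ}
    (hx : ∀ t, a ≤ t → HasDerivAt x (v t) t) (hv : ∀ t, a ≤ t → v t ∈ S)
    {t : ℝ} (ht : a ≤ t) : x t - x a ∈ S := by
  obtain ⟨q, hq⟩ := S.exists_isCompl
  let proj := (q.projectionOnto S hq.symm).toContinuousLinearMap
  have hproj : ∀ w, proj w = 0 ↔ w ∈ S := fun _ =>
    Submodule.projectionOnto_apply_eq_zero_iff hq.symm
  have hderiv : ∀ s, a ≤ s → HasDerivAt (proj ∘ x) 0 s := fun s hs => by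
    simpa [(hproj _).2 (hv s hs)] using proj.hasFDerivAt.comp_hasDerivAt s (hx s hs)
  have hconst : proj (x t) = proj (x a) :=
    constant_of_has_deriv_right_zero
      (fun s hs => (hderiv s hs.1).continuousAt.continuousWithinAt)
      (fun s hs => (hderiv s hs.1).hasDerivWithinAt) t ⟨ht, le_rfl⟩
  rw [← hproj, map_sub, hconst, sub_self]

theorem exists_norm_le_mul_sum_abs {ι : Type*} [Fintype ι] (S : Submodule ℝ (ι → ℝ))
    (Z : Finset ι) (hS : ∀ z ∈ S, (∀ i ∈ Z, z i = 0) → z = 0) :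
    ∃ K : ℝ, ∀ z ∈ S, ‖z‖ ≤ K * ∑ i ∈ Z, |z i| := by
  let T : S →ₗ[ℝ] (Z → ℝ) := LinearMap.funLeft ℝ ℝ ((↑) : Z → ι) ∘ₗ S.subtype
  have hT : LinearMap.ker T = ⊥ := LinearMap.ker_eq_bot'.2 fun z hz =>
    Subtype.ext (hS z z.2 fun i hi => congrFun hz ⟨i, hi⟩)
  obtain ⟨K, -, hK⟩ := T.exists_antilipschitzWith hT
  refine ⟨K, fun z hz => (hK.le_mul_norm (map_zero T) ⟨z, hz⟩).trans ?_⟩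
  gcongr
  refine (pi_norm_le_iff_of_nonneg (by positivity)).2 fun i => ?_
  exact Finset.single_le_sum (f := fun i => |z i|) (fun _ _ => abs_nonneg _) i.2

theorem netF_mem_stoichSubspace {m : ℕ} {ι : Type} [Fintype ι] (y yp : ι → Fin m → ℕ)
    (R : ι → (Fin m → ℝ) → ℝ) (w : Fin m → ℝ) : netF y yp R w ∈ stoichSubspace y yp :=
  Submodule.sum_mem _ fun r _ => Submodule.smul_mem _ _ (Submodule.subset_span ⟨r, rfl⟩)

noncomputable def lyapunov {ι : Type*} [Fintype ι] (xbar w : ι → ℝ) : ℝ :=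
  ∑ i, (w i * (log (w i) - log (xbar i) - 1) + xbar i)

section Lyapunov

variable {ι : Type*} [Fintype ι] (xbar : ι → ℝ)

theorem lyapunov_eq (w : ι → ℝ) :
    lyapunov xbar w = ∑ i, (w i * log (w i) - (log (xbar i) + 1) * w i + xbar i) :=
  Finset.sum_congr rfl fun _ _ => by ring

theorem continuous_lyapunov : Continuous (lyapunov xbar) := by
  simp_rw [funext (lyapunov_eq xbar)]
  fun_prop

theorem lyapunov_add_sub (p s : ι → ℝ) :
    lyapunov xbar (p + s) - lyapunov xbar p =
      ∑ i, ((p i + s i) * log (p i + s i) - p i * log (p i) - (log (xbar i) + 1) * s i) := by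
  simp only [lyapunov_eq, ← Finset.sum_sub_distrib, Pi.add_apply]
  exact Finset.sum_congr rfl fun _ _ => by ring

end Lyapunov

theorem eventually_lyapunov_add_le {ι α : Type*} [Fintype ι] (xbar : ι → ℝ) {p : ι → ℝ}
    {l : Filter α} {s : α → ι → ℝ} (hs : Tendsto s l (𝓝 0))
    (hpos : ∀ᶠ a in l, ∀ i, 0 < p i + s a i) {K : ℝ}
    (hK : ∀ᶠ a in l, ‖s a‖ ≤ K * ∑ i with p i = 0, |s a i|) :
    ∀ᶠ a in l, lyapunov xbar (p + s a) ≤ lyapunov xbar p := by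
  set σ : α → ℝ := fun a => ∑ i with p i = 0, s a i
  have hσ : Tendsto σ l (𝓝 0) := by
    simpa using tendsto_finsetSum _ fun i _ => (continuous_apply i).continuousAt.tendsto.comp hs
  have hσ_eq : ∀ᶠ a in l, ∑ i with p i = 0, |s a i| = σ a := hpos.mono fun a ha =>
    Finset.sum_congr rfl fun i hi => abs_of_pos <| by
      simpa [(Finset.mem_filter.1 hi).2] using ha i
  have hσ₀ : ∀ᶠ a in l, 0 ≤ σ a := hσ_eq.mono fun a ha => ha ▸ by positivity
  have hsσ : s =O[l] σ := IsBigO.of_bound K <| by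
    filter_upwards [hK, hσ_eq, hσ₀] with a hKa hσa hσ₀a
    rwa [norm_of_nonneg hσ₀a, ← hσa]
  let e : ι → α → ℝ := fun i a =>
    (p i + s a i) * log (p i + s a i) - p i * log (p i) - (log (xbar i) + 1) * s a i
      - if p i = 0 then s a i * log (s a i) else 0
  have he : ∀ i, e i =O[l] σ := fun i => by
    refine IsBigO.trans ?_ (isBigO_pi.1 hsσ i)
    by_cases hpi : p i = 0
    · simpa [e, hpi] using (isBigO_refl (fun a => s a i) l).const_mul_left (log (xbar i) + 1)
    · have hlim : Tendsto (fun a => p i + s a i) l (𝓝 (p i)) := by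
        simpa using ((continuous_apply i).tendsto 0).comp hs |>.const_add (p i)
      have hmul_log : (fun a => (p i + s a i) * log (p i + s a i) - p i * log (p i))
          =O[l] fun a => s a i := by
        simpa [Function.comp_def] using
          (hasDerivAt_mul_log hpi).isBigO_sub.comp_tendsto hlim
      simpa [e, hpi] using
        hmul_log.sub ((isBigO_refl (fun a => s a i) l).const_mul_left (log (xbar i) + 1))
  filter_upwards [eventually_mul_log_add_nonpos hσ hσ₀ (IsBigO.sum fun i _ => he i), hpos]
    with a ha hposa
  have hZ : ∑ i with p i = 0, s a i * log (s a i) ≤ σ a * log (σ a) :=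
    sum_mul_log_le_mul_log_sum fun i hi => by
      simpa [(Finset.mem_filter.1 hi).2] using (hposa i).le
  have hsplit : lyapunov xbar (p + s a) - lyapunov xbar p =
      ∑ i with p i = 0, s a i * log (s a i) + ∑ i, e i a := by
    rw [lyapunov_add_sub, Finset.sum_filter, ← Finset.sum_add_distrib]
    exact Finset.sum_congr rfl fun i _ => by simp only [e]; ring
  simp only [Finset.sum_apply] at ha
  linarith

theorem omega_limit_support_vector_general
    {m : ℕ} {ι : Type} [Fintype ι]
    (y yp : ι → Fin m → ℕ) (k : ι → ℝ)
    (x : ℝ → Fin m → ℝ)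
    (hxpos : ∀ t : ℝ, 0 ≤ t → ∀ i, 0 < x t i)
    (hODE : ∀ t : ℝ, 0 ≤ t → HasDerivAt x (massF y yp k (x t)) t)
    (xbar : Fin m → ℝ)
    (hVdec : StrictAntiOn
      (fun t => ∑ i, (x t i * (Real.log (x t i) - Real.log (xbar i) - 1) + xbar i))
      (Set.Ici (0 : ℝ)))
    (p : Fin m → ℝ)
    (hω : ∃ tn : ℕ → ℝ, Tendsto tn atTop atTop ∧
      Tendsto (fun n => x (tn n)) atTop (nhds p)) :
    ∃ z₀ ∈ stoichSubspace y yp, z₀ ≠ 0 ∧ ∀ i, p i = 0 → z₀ i = 0 := by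
  obtain ⟨tn, htn, hlim⟩ := hω
  by_contra! hcon
  set S := stoichSubspace y yp
  obtain ⟨K, hK⟩ := exists_norm_le_mul_sum_abs S {i | p i = 0} fun z hz hzZ => by
    by_contra hz0
    obtain ⟨i, hpi, hzi⟩ := hcon z hz hz0
    exact hzi (hzZ i (by simpa using hpi))
  have htn₀ : ∀ᶠ n in atTop, 0 ≤ tn n := htn.eventually_ge_atTop 0
  have hxS : ∀ t, 0 ≤ t → x t - x 0 ∈ S :=
    fun t => sub_mem_of_hasDerivAt_mem S hODE fun t _ => netF_mem_stoichSubspace y yp _ (x t)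
  have hpS : p - x 0 ∈ S := S.closed_of_finiteDimensional.mem_of_tendsto
    (hlim.sub_const _) (htn₀.mono fun n => hxS (tn n))
  have hVlim := ((continuous_lyapunov xbar).tendsto p).comp hlim
  have hlt : ∀ᶠ n in atTop, lyapunov xbar p < lyapunov xbar (x (tn n)) :=
    htn₀.mono fun n hn => hVdec.lt_of_tendsto_atTop htn hVlim hn
  have hle : ∀ᶠ n in atTop, lyapunov xbar (p + (x (tn n) - p)) ≤ lyapunov xbar p := by
    refine eventually_lyapunov_add_le xbar (K := K) (by simpa using hlim.sub_const p) ?_ ?_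
    · exact htn₀.mono fun n hn i => by simpa using hxpos (tn n) hn i
    · exact htn₀.mono fun n hn => hK _ (by simpa using S.sub_mem (hxS (tn n) hn) hpS)
  obtain ⟨n, hlt_n, hle_n⟩ := (hlt.and hle).exists
  rw [add_sub_cancel] at hle_n
  exact hle_n.not_gt hlt_n

/-- Key proposition: for a weakly reversible, deficiency zero mass action system,
if `V` is strictly decreasing along a trajectory and `p` is an ω-limit point of
the trajectory, then there is a nonzero `z₀` in the stoichiometric subspace with
`supp z₀ ⊆ supp p`. -/
theorem omega_limit_support_vector
    {m : ℕ} {ι : Type} [Fintype ι]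
    (y yp : ι → Fin m → ℕ) (k : ι → ℝ) (hk : ∀ r, 0 < k r)
    (hwr : WeaklyReversible y yp) (hdef : DeficiencyZero y yp)
    (x : ℝ → Fin m → ℝ)
    (hxpos : ∀ t : ℝ, 0 ≤ t → ∀ i, 0 < x t i)
    (hODE : ∀ t : ℝ, 0 ≤ t → HasDerivAt x (massF y yp k (x t)) t)
    (xbar : Fin m → ℝ) (hxbarpos : ∀ i, 0 < xbar i)
    (hxbarclass : xbar - x 0 ∈ stoichSubspace y yp)
    (hxbareq : massF y yp k xbar = 0)
    (hVdec : StrictAntiOn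
      (fun t => ∑ i, (x t i * (Real.log (x t i) - Real.log (xbar i) - 1) + xbar i))
      (Set.Ici (0 : ℝ)))
    (p : Fin m → ℝ)
    (hω : ∃ tn : ℕ → ℝ, Tendsto tn atTop atTop ∧
      Tendsto (fun n => x (tn n)) atTop (nhds p)) :
    ∃ z₀ ∈ stoichSubspace y yp, z₀ ≠ 0 ∧ ∀ i, p i = 0 → z₀ i = 0 :=
  omega_limit_support_vector_general y yp k x hxpos hODE xbar hVdec p hω
end

section
/- For y ∈ ℝ^m_{≥0}, let W = {i : y_i = 0}. Then y is an extreme point of the convex set (y + S) ∩ ℝ^m_{≥0} if and only if [(y+S) ∩ ℝ^m_{≥0}] ∩ L_W = {y}. -/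
/-!
If `x ≠ p` lies in `K ∩ L_W`, where `K = (p + S) ∩ ℝ^m_{≥0}`, then `x` vanishes exactly where `p`
does, so `p ± t (x - p)` stays in `K` for small `t > 0` and `p` is not extreme. Conversely, if `p`
lies in an open segment `]x, y[` of `K`, nonnegativity forces `x` to vanish wherever `p` does, so the
midpoint of `p` and `x` lies in `K ∩ L_W`; if that set is `{p}`, then `x = p`.
-/

open Filter Topology

theorem eq_zero_of_mem_extremePoints_of_eventually_add_smul_mem {E : Type*} [AddCommGroup E]
    [Module ℝ E] {A : Set E} {p v : E} (hp : p ∈ A.extremePoints ℝ)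
    (hv : ∀ᶠ t in 𝓝 (0 : ℝ), p + t • v ∈ A) : v = 0 := by
  have hv' : ∀ᶠ t in 𝓝 (0 : ℝ), p + (-t) • v ∈ A :=
    (neg_zero (G := ℝ) ▸ tendsto_neg (0 : ℝ)).eventually hv
  obtain ⟨t, ⟨hpos, hneg⟩, ht⟩ :=
    (((hv.and hv').filter_mono nhdsWithin_le_nhds).and
      (self_mem_nhdsWithin : {t : ℝ | t ≠ 0} ∈ 𝓝[≠] 0)).exists
  have hseg : p ∈ openSegment ℝ (p + t • v) (p + (-t) • v) :=
    ⟨1 / 2, 1 / 2, by norm_num, by norm_num, by norm_num, by module⟩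
  have htv : t • v = 0 := by
    simpa using (mem_extremePoints_iff_left.1 hp).2 _ hpos _ hneg hseg
  exact (smul_eq_zero.1 htv).resolve_left ht

theorem eventually_nonneg_add_smul_sub {ι : Type*} [Finite ι] {p x : ι → ℝ} (hp : 0 ≤ p)
    (hx : ∀ i, p i = 0 → x i = 0) : ∀ᶠ t in 𝓝 (0 : ℝ), 0 ≤ p + t • (x - p) := by
  refine eventually_all.2 fun i => ?_
  rcases (hp i).eq_or_lt with h | h
  · simp [← h, hx i h.symm]
  · have hcont : Tendsto (fun t : ℝ => p i + t * (x i - p i)) (𝓝 0) (𝓝 (p i)) :=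
      (by fun_prop : Continuous fun t : ℝ => p i + t * (x i - p i)).tendsto' 0 _ (by simp)
    exact (hcont.eventually_const_lt h).mono fun t ht => by simpa using ht.le

theorem eq_zero_of_mem_openSegment_of_eq_zero {ι : Type*} {x y p : ι → ℝ} (hx : 0 ≤ x)
    (hy : 0 ≤ y) (h : p ∈ openSegment ℝ x y) {i : ι} (hi : p i = 0) : x i = 0 := by
  obtain ⟨a, b, ha, hb, -, rfl⟩ := h
  have hsum : a * x i + b * y i = 0 := by simpa using hi
  have hax : a * x i = 0 :=
    ((add_eq_zero_iff_of_nonneg (mul_nonneg ha.le (hx i)) (mul_nonneg hb.le (hy i))).1 hsum).1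
  exact (mul_eq_zero.1 hax).resolve_left ha.ne'

theorem midpoint_apply_eq_zero_iff {ι : Type*} {p x : ι → ℝ} (hp : 0 ≤ p) (hx : 0 ≤ x)
    (hxp : ∀ i, p i = 0 → x i = 0) (i : ι) : midpoint ℝ p x i = 0 ↔ p i = 0 := by
  simp only [midpoint_eq_smul_add, Pi.smul_apply, Pi.add_apply, smul_eq_mul, invOf_eq_inv,
    mul_eq_zero, inv_eq_zero, two_ne_zero, false_or, add_eq_zero_iff_of_nonneg (hp i) (hx i)]
  exact ⟨And.left, fun h => ⟨h, hxp i h⟩⟩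

/-- For `p ∈ ℝ^m_{≥0}` with `W = {i : p i = 0}`: `p` is an extreme point of
`(p + S) ∩ ℝ^m_{≥0}` if and only if `[(p+S) ∩ ℝ^m_{≥0}] ∩ L_W = {p}`. -/
theorem extreme_point_iff_singleton
    {m : ℕ} (S : Submodule ℝ (Fin m → ℝ))
    (p : Fin m → ℝ) (hp : ∀ i, 0 ≤ p i) :
    p ∈ Set.extremePoints ℝ
        ({x : Fin m → ℝ | x - p ∈ S} ∩ {x | ∀ i, 0 ≤ x i}) ↔
      ({x : Fin m → ℝ | x - p ∈ S} ∩ {x | ∀ i, 0 ≤ x i} ∩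
        {x | ∀ i, x i = 0 ↔ p i = 0}) = {p} := by
  set K : Set (Fin m → ℝ) := {x | x - p ∈ S} ∩ {x | ∀ i, 0 ≤ x i}
  have hpK : p ∈ K := ⟨by simp, hp⟩
  constructor
  · intro hext
    refine Set.eq_singleton_iff_unique_mem.2 ⟨⟨hpK, fun _ => Iff.rfl⟩, ?_⟩
    rintro x ⟨⟨hxS, -⟩, hxW⟩
    have hline : ∀ᶠ t in 𝓝 (0 : ℝ), p + t • (x - p) ∈ K :=
      (eventually_nonneg_add_smul_sub hp fun i => (hxW i).2).mono fun t ht =>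
        ⟨by simpa using S.smul_mem t hxS, ht⟩
    exact sub_eq_zero.1 (eq_zero_of_mem_extremePoints_of_eventually_add_smul_mem hext hline)
  · intro hface
    refine mem_extremePoints_iff_left.2 ⟨hpK, fun x ⟨hxS, hx⟩ y ⟨_, hy⟩ hseg => ?_⟩
    have hxp : ∀ i, p i = 0 → x i = 0 := fun _ =>
      eq_zero_of_mem_openSegment_of_eq_zero hx hy hseg
    have hmid : midpoint ℝ p x ∈ K ∩ {x | ∀ i, x i = 0 ↔ p i = 0} := by
      refine ⟨⟨?_, ?_⟩, midpoint_apply_eq_zero_iff hp hx hxp⟩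
      · simpa [midpoint_sub_left] using S.smul_mem (⅟2 : ℝ) hxS
      · intro i
        simpa [midpoint_eq_smul_add] using add_nonneg (hp i) (hx i)
    rw [hface] at hmid
    exact ((midpoint_eq_left_iff ℝ).1 hmid).symm
end

section
/- Let S ⊆ ℝ^m be a subspace and suppose that the set [(c+S) ∩ ℝ^m_{≥0}] ∩ L_W contains a point y together with points y + ηz₀ for all sufficiently small η > 0, where z₀ ∈ S is nonzero with supp(z₀) ⊆ supp(y). Then [(c+S) ∩ ℝ^m_{≥0}] ∩ L_W is not discrete. Conversely, if a nonzero z₀ ∈ S with supp(z₀) ⊆ supp(y) exists for some y in this set, then y + ηz₀ belongs to the set for all sufficiently small η > 0. -/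
/-!
Moving from `p` along `z₀` leaves the coordinates where `p` vanishes at zero, and for `|η|` small
keeps the others positive; since `z₀ ∈ S` it also stays in `c + S`. So `p + η • z₀` stays in the
set for all small `η`, and these points are distinct from `p` and accumulate at it.
-/

open Filter Topology

/-- The set `[(c + S) ∩ ℝ^ι_{≥0}] ∩ L_W`. -/
def feasibleStratum {ι : Type*} (S : Submodule ℝ (ι → ℝ)) (c : ι → ℝ) (W : Set ι) :
    Set (ι → ℝ) :=
  {x | x - c ∈ S} ∩ {x | ∀ i, 0 ≤ x i} ∩ {x | ∀ i, x i = 0 ↔ i ∈ W}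

lemma eventually_nonneg_and_eq_zero_iff_add_mul {a b : ℝ} (ha : 0 ≤ a) (hab : a = 0 → b = 0) :
    ∀ᶠ η in 𝓝 (0 : ℝ), 0 ≤ a + η * b ∧ (a + η * b = 0 ↔ a = 0) := by
  rcases ha.eq_or_lt with rfl | ha
  · simp [hab rfl]
  · have hlim : Tendsto (fun η : ℝ => a + η * b) (𝓝 0) (𝓝 a) := by
      simpa using (tendsto_const_nhds.add (tendsto_id.mul_const b) :
        Tendsto (fun η : ℝ => a + η * b) (𝓝 0) (𝓝 (a + 0 * b)))
    filter_upwards [hlim.eventually (lt_mem_nhds ha)] with η hη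
    exact ⟨hη.le, by simp [hη.ne', ha.ne']⟩

lemma eventually_add_smul_mem_feasibleStratum {ι : Type*} [Finite ι]
    {S : Submodule ℝ (ι → ℝ)} {c : ι → ℝ} {W : Set ι} {p z : ι → ℝ}
    (hp : p ∈ feasibleStratum S c W) (hz : z ∈ S) (hsupp : ∀ i, p i = 0 → z i = 0) :
    ∀ᶠ η in 𝓝 (0 : ℝ), p + η • z ∈ feasibleStratum S c W := by
  obtain ⟨⟨hpc, hnonneg⟩, hzero⟩ := hp
  have hcoord : ∀ᶠ η in 𝓝 (0 : ℝ), ∀ i, 0 ≤ p i + η * z i ∧ (p i + η * z i = 0 ↔ p i = 0) :=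
    eventually_all.2 fun i => eventually_nonneg_and_eq_zero_iff_add_mul (hnonneg i) (hsupp i)
  filter_upwards [hcoord] with η hη
  refine ⟨⟨?_, fun i => (hη i).1⟩, fun i => (hη i).2.trans (hzero i)⟩
  simpa only [Set.mem_ofPred_eq, add_sub_right_comm] using S.add_mem hpc (S.smul_mem η hz)

lemma not_isolated_of_eventually_add_smul_mem {E : Type*} [NormedAddCommGroup E]
    [NormedSpace ℝ E] {A : Set E} {p z : E} (hz : z ≠ 0)
    (hA : ∀ᶠ η in 𝓝 (0 : ℝ), p + η • z ∈ A) :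
    ¬ ∃ ε > 0, ∀ b ∈ A, dist b p < ε → b = p := by
  rintro ⟨ε, hε, hisolated⟩
  have hlim : Tendsto (fun η : ℝ => p + η • z) (𝓝 0) (𝓝 p) := by
    simpa using (tendsto_const_nhds.add (tendsto_id.smul_const z) :
      Tendsto (fun η : ℝ => p + η • z) (𝓝 0) (𝓝 (p + (0 : ℝ) • z)))
  have hnear : ∀ᶠ η in 𝓝[≠] (0 : ℝ), (p + η • z ∈ A ∧ dist (p + η • z) p < ε) ∧ η ≠ 0 :=
    ((hA.and (hlim.eventually (Metric.ball_mem_nhds p hε))).filter_mono nhdsWithin_le_nhds).and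
      eventually_mem_nhdsWithin
  obtain ⟨η, ⟨hmem, hdist⟩, hη⟩ := hnear.exists
  have hsmul : η • z = 0 := add_eq_left.1 (hisolated _ hmem hdist)
  exact (smul_ne_zero hη hz) hsmul

/-- If `p ∈ [(c+S) ∩ ℝ^m_{≥0}] ∩ L_W` and there is a nonzero `z₀ ∈ S` with
`supp z₀ ⊆ supp p`, then `p + η • z₀` belongs to the same set for all
sufficiently small `η > 0`, and consequently the set is not discrete. -/
theorem not_discrete_of_support_vector
    {m : ℕ} (S : Submodule ℝ (Fin m → ℝ)) (c : Fin m → ℝ) (W : Set (Fin m))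
    (p : Fin m → ℝ)
    (hpA : p ∈ ({x : Fin m → ℝ | x - c ∈ S} ∩ {x | ∀ i, 0 ≤ x i} ∩
      {x | ∀ i, x i = 0 ↔ i ∈ W}))
    (z₀ : Fin m → ℝ) (hz₀S : z₀ ∈ S) (hz₀ne : z₀ ≠ 0)
    (hsupp : ∀ i, p i = 0 → z₀ i = 0) :
    (∃ η₀ > (0 : ℝ), ∀ η : ℝ, 0 < η → η < η₀ →
      p + η • z₀ ∈ ({x : Fin m → ℝ | x - c ∈ S} ∩ {x | ∀ i, 0 ≤ x i} ∩
        {x | ∀ i, x i = 0 ↔ i ∈ W})) ∧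
    ¬ (∀ a ∈ ({x : Fin m → ℝ | x - c ∈ S} ∩ {x | ∀ i, 0 ≤ x i} ∩
        {x | ∀ i, x i = 0 ↔ i ∈ W}),
        ∃ ε > (0 : ℝ), ∀ b ∈ ({x : Fin m → ℝ | x - c ∈ S} ∩ {x | ∀ i, 0 ≤ x i} ∩
          {x | ∀ i, x i = 0 ↔ i ∈ W}), dist b a < ε → b = a) := by
  have hnear : ∀ᶠ η in 𝓝 (0 : ℝ), p + η • z₀ ∈ feasibleStratum S c W :=
    eventually_add_smul_mem_feasibleStratum hpA hz₀S hsupp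
  refine ⟨?_, fun hdiscrete =>
    not_isolated_of_eventually_add_smul_mem hz₀ne hnear (hdiscrete p hpA)⟩
  obtain ⟨η₀, hη₀, hball⟩ := Metric.eventually_nhds_iff.1 hnear
  exact ⟨η₀, hη₀, fun η hη hηlt => hball (by rwa [Real.dist_0_eq_abs, abs_of_pos hη])⟩
end

section
/- If a weakly reversible reaction network has exactly one linkage class, then every semi-locking set is a locking set (i.e., every reactant complex contains a species from the set). -/
open Filter

/-! The property "the complex meets `W`" is inherited backwards along every reaction, since
`W` is semi-locking. Weak reversibility turns each reaction into the end of a path back to its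
reactant, so the property also propagates forwards and is constant on linkage classes. As `W` is
nonempty and each of its species occurs in some complex, some reactant complex meets `W`; with a
single linkage class, all of them do. -/

def Meets {m : ℕ} (W : Set (Fin m)) (c : Fin m → ℕ) : Prop :=
  ∃ i ∈ W, c i ≠ 0

namespace Semilocking

variable {m : ℕ} {ι : Type} [Fintype ι] {y yp : ι → Fin m → ℕ} {W : Set (Fin m)}

theorem meets_of_reactsTo (hW : Semilocking y yp W) {a b : Fin m → ℕ}
    (hab : reactsTo y yp a b) (hb : Meets W b) : Meets W a := by
  obtain ⟨r, rfl, rfl⟩ := hab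
  exact hW.2 r hb

theorem meets_of_reflTransGen (hW : Semilocking y yp W) {a b : Fin m → ℕ}
    (hab : Relation.ReflTransGen (reactsTo y yp) a b) (hb : Meets W b) : Meets W a := by
  induction hab using Relation.ReflTransGen.head_induction_on with
  | refl => exact hb
  | head hac _ ih => exact hW.meets_of_reactsTo hac ih

theorem meets_iff_of_reactsTo (hwr : WeaklyReversible y yp) (hW : Semilocking y yp W)
    {a b : Fin m → ℕ} (hab : reactsTo y yp a b) : Meets W a ↔ Meets W b := by
  refine ⟨fun ha => ?_, hW.meets_of_reactsTo hab⟩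
  obtain ⟨r, rfl, rfl⟩ := hab
  exact hW.meets_of_reflTransGen (hwr r) ha

theorem meets_iff_of_eqvGen (hwr : WeaklyReversible y yp) (hW : Semilocking y yp W)
    {a b : Fin m → ℕ} (hab : Relation.EqvGen (reactsTo y yp) a b) : Meets W a ↔ Meets W b :=
  have hequiv : Equivalence fun a b : Fin m → ℕ => Meets W a ↔ Meets W b :=
    ⟨fun _ => Iff.rfl, Iff.symm, Iff.trans⟩
  hequiv.eqvGen_iff.mp (Relation.EqvGen.mono (fun _ _ => hW.meets_iff_of_reactsTo hwr) _ _ hab)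

theorem exists_reactant_meets (hspecies : ∀ i : Fin m, ∃ r, y r i ≠ 0 ∨ yp r i ≠ 0)
    (hW : Semilocking y yp W) : ∃ r, Meets W (y r) := by
  obtain ⟨i, hi⟩ := hW.1
  obtain ⟨r, hr | hr⟩ := hspecies i
  · exact ⟨r, i, hi, hr⟩
  · exact ⟨r, hW.2 r ⟨i, hi, hr⟩⟩

end Semilocking

/-- For a weakly reversible network with exactly one linkage class (every species
appearing in some complex), every semi-locking set is a locking set: every
reactant complex contains a species of `W`. -/
theorem semilocking_is_locking_of_single_linkage_class
    {m : ℕ} {ι : Type} [Fintype ι]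
    (y yp : ι → Fin m → ℕ)
    (hwr : WeaklyReversible y yp)
    (hone : ∀ a ∈ complexes y yp, ∀ b ∈ complexes y yp,
      Relation.EqvGen (reactsTo y yp) a b)
    (hspecies : ∀ i : Fin m, ∃ r, y r i ≠ 0 ∨ yp r i ≠ 0)
    (W : Set (Fin m)) (hW : Semilocking y yp W) :
    ∀ r, ∃ i ∈ W, y r i ≠ 0 := by
  intro r
  obtain ⟨r₀, hr₀⟩ := hW.exists_reactant_meets hspecies
  have hlinked := hone (y r₀) (Or.inl ⟨r₀, rfl⟩) (y r) (Or.inl ⟨r, rfl⟩)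
  exact (hW.meets_iff_of_eqvGen hwr hlinked).mp hr₀
end

section
/- Let θ_i : ℝ_{≥0} → ℝ_{≥0} be strictly increasing, onto, with θ_i(0) = 0 and ∫₀¹ |ln θ_i(s)| ds < ∞, and let ρ_i = ln θ_i. For fixed x̄ ∈ ℝ^m_{>0}, define V(x) = Σ_{i=1}^m ∫_{x̄_i}^{x_i} (ρ_i(s) − ρ_i(x̄_i)) ds on ℝ^m_{>0}. Then V(x) ≥ 0 with equality iff x = x̄, V extends continuously to ℝ^m_{≥0}, and ∂V/∂x_i(x) = ρ_i(x_i) − ρ_i(x̄_i) → −∞ as x_i → 0⁺. -/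
/-!
Since `ρ = ln ∘ θ` is strictly increasing on `(0, ∞)`, the integrand `ρ(s) − ρ(x̄ᵢ)` has the sign
of `s − x̄ᵢ`, so each summand of `V` is positive unless `xᵢ = x̄ᵢ`. A strictly monotone `θ` with
image `[0, ∞)` is continuous, so `ρ` is continuous on `(0, ∞)`; with the integrability of `ρ`
near `0` this makes `ρ` integrable on every `[0, b]`. Hence the formula for `V` already makes
sense and is continuous on the closed orthant, the fundamental theorem of calculus gives its
partial derivatives, and `ρ(s) → −∞` as `s → 0⁺` because `θ(s) → θ(0) = 0`.
-/

open MeasureTheory Set Filter Topology intervalIntegral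

/-- The generalized Lyapunov function
`V(x) = Σ_i ∫_{x̄_i}^{x_i} (ρ_i(s) − ρ_i(x̄_i)) ds` with `ρ_i = ln θ_i`. -/
noncomputable def lyapV {m : ℕ} (θ : Fin m → ℝ → ℝ) (xbar x : Fin m → ℝ) : ℝ :=
  ∑ i, ∫ s in (xbar i)..(x i), (Real.log (θ i s) - Real.log (θ i (xbar i)))

section Primitive

variable {f : ℝ → ℝ}

theorem integral_sub_apply_left_pos_of_strictMonoOn {a b : ℝ} (hf : StrictMonoOn f (uIcc a b))
    (hfi : IntervalIntegrable f volume a b) (hab : a ≠ b) :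
    0 < ∫ s in a..b, (f s - f a) := by
  rcases hab.lt_or_gt with hab | hba
  · rw [uIcc_of_le hab.le] at hf
    refine intervalIntegral_pos_of_pos_on (hfi.sub intervalIntegrable_const) (fun s hs => ?_) hab
    exact sub_pos.2 (hf (left_mem_Icc.2 hab.le) (Ioo_subset_Icc_self hs) hs.1)
  · rw [uIcc_of_ge hba.le] at hf
    rw [integral_symm, ← intervalIntegral.integral_neg]
    refine intervalIntegral_pos_of_pos_on (hfi.symm.sub intervalIntegrable_const).neg
      (fun s hs => ?_) hba
    exact neg_pos.2 (sub_neg.2 (hf (Ioo_subset_Icc_self hs) (right_mem_Icc.2 hba.le) hs.2))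

theorem intervalIntegrable_of_continuousOn_Ioi {c d b : ℝ} (hd : IntervalIntegrable f volume c d)
    (hf : ContinuousOn f (Ioi c)) (hcd : c < d) (hb : c ≤ b) :
    IntervalIntegrable f volume c b := by
  have hdb : IntervalIntegrable f volume d (max b d) :=
    (hf.mono fun s hs => hcd.trans_le (uIcc_of_le (le_max_right b d) ▸ hs).1).intervalIntegrable
  refine (hd.trans hdb).mono_set (uIcc_subset_uIcc left_mem_uIcc ?_)
  rw [uIcc_of_le (hb.trans (le_max_left b d))]
  exact ⟨hb, le_max_left b d⟩

theorem continuousOn_primitive_Ici {c a : ℝ}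
    (hf : ∀ b, c ≤ b → IntervalIntegrable f volume c b) (ha : c ≤ a) :
    ContinuousOn (fun t => ∫ s in a..t, f s) (Ici c) := by
  intro t ht
  have hcB : c ≤ max a t + 1 := by linarith [le_max_left a t]
  have hcont := continuousOn_primitive_interval' (hf _ hcB)
    (by rw [uIcc_of_le hcB]; exact ⟨ha, by linarith [le_max_left a t]⟩)
  rw [uIcc_of_le hcB] at hcont
  refine (hcont t ⟨ht, by linarith [le_max_right a t]⟩).mono_of_mem_nhdsWithin ?_
  rw [← Ici_inter_Iic]
  exact inter_mem_nhdsWithin _ (Iic_mem_nhds (by linarith [le_max_right a t]))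

end Primitive

theorem hasDerivAt_sum_update {ι : Type*} [Fintype ι] [DecidableEq ι] (F : ι → ℝ → ℝ)
    (x : ι → ℝ) (i : ι) {d : ℝ} (h : HasDerivAt (F i) d (x i)) :
    HasDerivAt (fun t => ∑ j, F j (Function.update x i t j)) d (x i) := by
  have hsplit : (fun t => ∑ j, F j (Function.update x i t j)) =
      fun t => F i t + ∑ j ∈ Finset.univ \ {i}, F j (x j) := by
    funext t
    simp only [Function.apply_update F x i t]
    exact Finset.sum_update_of_mem (Finset.mem_univ i) _ _
  rw [hsplit]
  exact h.add_const _

section Kinetics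

variable {θ : ℝ → ℝ}

theorem pos_of_strictMonoOn_Ici (hmono : StrictMonoOn θ (Ici 0)) (h0 : θ 0 = 0) {s : ℝ}
    (hs : 0 < s) : 0 < θ s :=
  h0 ▸ hmono self_mem_Ici hs.le hs

theorem continuousAt_of_strictMonoOn_Ici (hmono : StrictMonoOn θ (Ici 0))
    (hsurj : θ '' Ici 0 = Ici 0) (h0 : θ 0 = 0) {a : ℝ} (ha : 0 < a) : ContinuousAt θ a :=
  hmono.continuousAt_of_image_mem_nhds (mem_of_superset (Ioi_mem_nhds ha) Ioi_subset_Ici_self)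
    (by rw [hsurj]
        exact mem_of_superset (Ioi_mem_nhds (pos_of_strictMonoOn_Ici hmono h0 ha))
          Ioi_subset_Ici_self)

theorem tendsto_nhdsGT_zero_of_strictMonoOn_Ici (hmono : StrictMonoOn θ (Ici 0))
    (hsurj : θ '' Ici 0 = Ici 0) (h0 : θ 0 = 0) : Tendsto θ (𝓝[>] 0) (𝓝[>] 0) := by
  have hright : ContinuousWithinAt θ (Ici 0) 0 :=
    hmono.continuousWithinAt_right_of_surjOn self_mem_nhdsWithin
      fun y hy => by rw [hsurj]; exact Ioi_subset_Ici_self (h0 ▸ hy)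
  refine tendsto_nhdsWithin_iff.2 ⟨?_, ?_⟩
  · simpa [h0] using hright.tendsto.mono_left (nhdsWithin_mono 0 Ioi_subset_Ici_self)
  · filter_upwards [self_mem_nhdsWithin] with s hs using pos_of_strictMonoOn_Ici hmono h0 hs

theorem continuousOn_log_comp_of_strictMonoOn_Ici (hmono : StrictMonoOn θ (Ici 0))
    (hsurj : θ '' Ici 0 = Ici 0) (h0 : θ 0 = 0) :
    ContinuousOn (fun s => Real.log (θ s)) (Ioi 0) := fun _ ha =>
  ((continuousAt_of_strictMonoOn_Ici hmono hsurj h0 ha).log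
    (pos_of_strictMonoOn_Ici hmono h0 ha).ne').continuousWithinAt

theorem strictMonoOn_log_comp (hmono : StrictMonoOn θ (Ici 0)) (h0 : θ 0 = 0) :
    StrictMonoOn (fun s => Real.log (θ s)) (Ioi 0) := fun _ ha _ hb hab =>
  Real.log_lt_log (pos_of_strictMonoOn_Ici hmono h0 ha)
    (hmono (Ioi_subset_Ici_self ha) (Ioi_subset_Ici_self hb) hab)

theorem intervalIntegrable_log_comp (hmono : StrictMonoOn θ (Ici 0))
    (hsurj : θ '' Ici 0 = Ici 0) (h0 : θ 0 = 0)
    (hint : IntegrableOn (fun s => |Real.log (θ s)|) (Ioc 0 1)) {a b : ℝ} (ha : 0 ≤ a)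
    (hb : 0 ≤ b) : IntervalIntegrable (fun s => Real.log (θ s)) volume a b := by
  have hcont := continuousOn_log_comp_of_strictMonoOn_Ici hmono hsurj h0
  have h01 : IntervalIntegrable (fun s => Real.log (θ s)) volume 0 1 := by
    have hmeas : AEStronglyMeasurable (fun s => Real.log (θ s)) (volume.restrict (Ioc 0 1)) :=
      (hcont.mono Ioc_subset_Ioi_self).aestronglyMeasurable measurableSet_Ioc
    rw [intervalIntegrable_iff_integrableOn_Ioc_of_le zero_le_one, IntegrableOn,
      ← integrable_norm_iff hmeas]
    simpa only [Real.norm_eq_abs, IntegrableOn] using hint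
  exact (intervalIntegrable_of_continuousOn_Ioi h01 hcont one_pos ha).symm.trans
    (intervalIntegrable_of_continuousOn_Ioi h01 hcont one_pos hb)

theorem tendsto_log_comp_atBot (hmono : StrictMonoOn θ (Ici 0)) (hsurj : θ '' Ici 0 = Ici 0)
    (h0 : θ 0 = 0) : Tendsto (fun s => Real.log (θ s)) (𝓝[>] 0) atBot :=
  Real.tendsto_log_nhdsGT_zero.comp (tendsto_nhdsGT_zero_of_strictMonoOn_Ici hmono hsurj h0)

end Kinetics

section LyapunovFunction

variable {m : ℕ} {θ : Fin m → ℝ → ℝ} {xbar : Fin m → ℝ}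

theorem lyapV_nonneg_and_eq_zero_iff
    (hρmono : ∀ i, StrictMonoOn (fun s => Real.log (θ i s)) (Ioi 0))
    (hρint : ∀ i {a b : ℝ}, 0 ≤ a → 0 ≤ b →
      IntervalIntegrable (fun s => Real.log (θ i s)) volume a b)
    (hxbar : ∀ i, 0 < xbar i) {x : Fin m → ℝ} (hx : ∀ i, 0 < x i) :
    0 ≤ lyapV θ xbar x ∧ (lyapV θ xbar x = 0 ↔ x = xbar) := by
  have hpos : ∀ i, x i ≠ xbar i →
      0 < ∫ s in (xbar i)..(x i), (Real.log (θ i s) - Real.log (θ i (xbar i))) := fun i hne =>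
    integral_sub_apply_left_pos_of_strictMonoOn
      ((hρmono i).mono (ordConnected_Ioi.uIcc_subset (hxbar i) (hx i)))
      (hρint i (hxbar i).le (hx i).le) (Ne.symm hne)
  have hnonneg : ∀ i ∈ Finset.univ,
      0 ≤ ∫ s in (xbar i)..(x i), (Real.log (θ i s) - Real.log (θ i (xbar i))) := by
    intro i _
    by_cases h : x i = xbar i
    · simp [h]
    · exact (hpos i h).le
  refine ⟨Finset.sum_nonneg hnonneg, ?_⟩
  rw [lyapV, Finset.sum_eq_zero_iff_of_nonneg hnonneg, funext_iff]
  refine forall_congr' fun i => ⟨fun h => by_contra fun hne => ?_, fun h _ => by simp [h]⟩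
  exact (hpos i hne).ne' (h (Finset.mem_univ i))

theorem continuousOn_lyapV
    (hρint : ∀ i {a b : ℝ}, 0 ≤ a → 0 ≤ b →
      IntervalIntegrable (fun s => Real.log (θ i s)) volume a b)
    (hxbar : ∀ i, 0 ≤ xbar i) : ContinuousOn (lyapV θ xbar) {x | ∀ i, 0 ≤ x i} :=
  continuousOn_finsetSum _ fun i _ =>
    (continuousOn_primitive_Ici (fun _ hb => (hρint i le_rfl hb).sub intervalIntegrable_const)
      (hxbar i)).comp (continuous_apply i).continuousOn fun _ hx => hx i

theorem hasDerivAt_lyapV_update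
    (hρcont : ∀ i, ContinuousOn (fun s => Real.log (θ i s)) (Ioi 0))
    (hρint : ∀ i {a b : ℝ}, 0 ≤ a → 0 ≤ b →
      IntervalIntegrable (fun s => Real.log (θ i s)) volume a b)
    (hxbar : ∀ i, 0 ≤ xbar i) {x : Fin m → ℝ} (hx : ∀ i, 0 < x i) (i : Fin m) :
    HasDerivAt (fun t => lyapV θ xbar (Function.update x i t))
      (Real.log (θ i (x i)) - Real.log (θ i (xbar i))) (x i) :=
  hasDerivAt_sum_update
    (fun j u => ∫ s in (xbar j)..u, (Real.log (θ j s) - Real.log (θ j (xbar j)))) x i <|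
    integral_hasDerivAt_right
    ((hρint i (hxbar i) (hx i).le).sub intervalIntegrable_const)
    (((hρcont i).sub continuousOn_const).stronglyMeasurableAtFilter isOpen_Ioi _ (hx i))
    (((hρcont i).continuousAt (Ioi_mem_nhds (hx i))).sub continuousAt_const)

end LyapunovFunction

/-- For kinetics built from functions `θ_i` that are strictly increasing on
`[0,∞)`, onto `[0,∞)`, vanish at `0`, and have `|ln θ_i|` integrable near `0`:
the Lyapunov function `V` is nonnegative on the positive orthant and vanishes
exactly at `x̄`, extends continuously to the nonnegative orthant, its partial
derivatives are `ρ_i(x_i) − ρ_i(x̄_i)`, and these tend to `−∞` as `x_i → 0⁺`. -/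
theorem generalized_lyapunov_properties
    {m : ℕ} (θ : Fin m → ℝ → ℝ)
    (hmono : ∀ i, StrictMonoOn (θ i) (Set.Ici (0 : ℝ)))
    (hsurj : ∀ i, θ i '' Set.Ici (0 : ℝ) = Set.Ici (0 : ℝ))
    (h0 : ∀ i, θ i 0 = 0)
    (hint : ∀ i, IntegrableOn (fun s => |Real.log (θ i s)|) (Set.Ioc (0 : ℝ) 1))
    (xbar : Fin m → ℝ) (hxbar : ∀ i, 0 < xbar i) :
    (∀ x : Fin m → ℝ, (∀ i, 0 < x i) →
      0 ≤ lyapV θ xbar x ∧ (lyapV θ xbar x = 0 ↔ x = xbar)) ∧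
    (∃ Vbar : (Fin m → ℝ) → ℝ,
      ContinuousOn Vbar {x | ∀ i, 0 ≤ x i} ∧
      ∀ x : Fin m → ℝ, (∀ i, 0 < x i) → Vbar x = lyapV θ xbar x) ∧
    (∀ x : Fin m → ℝ, (∀ i, 0 < x i) → ∀ i,
      HasDerivAt (fun t => lyapV θ xbar (Function.update x i t))
        (Real.log (θ i (x i)) - Real.log (θ i (xbar i))) (x i)) ∧
    (∀ i, Filter.Tendsto
      (fun s => Real.log (θ i s) - Real.log (θ i (xbar i)))
      (nhdsWithin 0 (Set.Ioi 0)) Filter.atBot) := by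
  have hρmono i := strictMonoOn_log_comp (hmono i) (h0 i)
  have hρcont i := continuousOn_log_comp_of_strictMonoOn_Ici (hmono i) (hsurj i) (h0 i)
  have hρint i {a b : ℝ} (ha : 0 ≤ a) (hb : 0 ≤ b) :=
    intervalIntegrable_log_comp (hmono i) (hsurj i) (h0 i) (hint i) ha hb
  refine ⟨fun x hx => lyapV_nonneg_and_eq_zero_iff hρmono hρint hxbar hx,
    ⟨lyapV θ xbar, continuousOn_lyapV hρint fun i => (hxbar i).le, fun _ _ => rfl⟩,
    fun x hx => hasDerivAt_lyapV_update hρcont hρint (fun i => (hxbar i).le) hx,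
    fun i => tendsto_atBot_add_const_right _ _
      (tendsto_log_comp_atBot (hmono i) (hsurj i) (h0 i))⟩
end
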